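/- arXiv:0807.5001 — 2 statements merged into one kernel-verified Lean document; each statement's English description precedes it below -/
import Mathlib

section
/- For every n ≥ 1, every x : Fin n → ℝ, and every index i, one has ∑_{k=1}^{n} (1/N(k)) · 1[x i = rank_k(x)] = 1, where N(k) = |{j : x j = rank_k(x)}| and 1[·] denotes the indicator (the summand is interpreted as 0 when the indicator vanishes). -/
/-- The k-th rank (reverse order statistic): the maximum over all k-element
subsets `S` of `Fin n` of the minimum of `x` over `S`. -/
noncomputable def rankProc {n : ℕ} (x : Fin n → ℝ) (k : ℕ) : ℝ :=
  sSup { r : ℝ | ∃ S : Finset (Fin n), S.card = k ∧ ∃ hS : S.Nonempty, r = S.inf' hS x }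

open Finset

lemma rankSet_subset_range {n : ℕ} (x : Fin n → ℝ) (k : ℕ) :
    { r : ℝ | ∃ S : Finset (Fin n), S.card = k ∧ ∃ hS : S.Nonempty, r = S.inf' hS x }
      ⊆ Set.range x := by
  rintro r ⟨S, hcard, hS, rfl⟩
  obtain ⟨j, _, hj⟩ := Finset.exists_mem_eq_inf' hS x
  exact ⟨j, hj.symm⟩

lemma rank_eq_iff {n : ℕ} (x : Fin n → ℝ) (i : Fin n) (k : ℕ)
    (hk1 : 1 ≤ k) (hk2 : k ≤ n) :
    x i = rankProc x k ↔
      ((Finset.univ.filter fun j : Fin n => x i < x j).card < k ∧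
       k ≤ (Finset.univ.filter fun j : Fin n => x i < x j).card +
           (Finset.univ.filter fun j : Fin n => x j = x i).card) := by
  set R := { r : ℝ | ∃ S : Finset (Fin n), S.card = k ∧ ∃ hS : S.Nonempty, r = S.inf' hS x }
    with hR
  set c := (Finset.univ.filter fun j : Fin n => x i < x j).card with hc
  set N := (Finset.univ.filter fun j : Fin n => x j = x i).card with hN
  have hfin : R.Finite := (Set.finite_range x).subset (rankSet_subset_range x k)
  have hbdd : BddAbove R := hfin.bddAbove
  have hcN : (Finset.univ.filter fun j : Fin n => x i ≤ x j).card = c + N := by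
    rw [hc, hN, ← Finset.card_union_of_disjoint]
    · congr 1
      ext j
      simp only [Finset.mem_filter, Finset.mem_union, Finset.mem_univ, true_and]
      constructor
      · intro h
        rcases lt_or_eq_of_le h with h | h
        · exact Or.inl h
        · exact Or.inr h.symm
      · rintro (h | h)
        · exact le_of_lt h
        · exact le_of_eq h.symm
    · rw [Finset.disjoint_filter]
      intro j _ hj hj'
      rw [hj'] at hj
      exact lt_irrefl _ hj
  constructor
  · intro h
    have hmem : rankProc x k ∈ R := by
      apply Set.Nonempty.csSup_mem _ hfin
      obtain ⟨S, hSsub, hScard⟩ := Finset.exists_subset_card_eq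
        (show k ≤ (Finset.univ : Finset (Fin n)).card by simpa using hk2)
      have hS : S.Nonempty := Finset.card_pos.mp (hScard ▸ hk1)
      exact ⟨S.inf' hS x, S, hScard, hS, rfl⟩
    obtain ⟨S, hScard, hS, hSinf⟩ := hmem
    have hxi : S.inf' hS x = x i := by rw [← hSinf, ← h]
    constructor
    · by_contra hck
      push_neg at hck
      obtain ⟨T, hTsub, hTcard⟩ := Finset.exists_subset_card_eq hck
      have hT : T.Nonempty := Finset.card_pos.mp (hTcard ▸ hk1)
      have hmemT : T.inf' hT x ∈ R := ⟨T, hTcard, hT, rfl⟩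
      have hle : T.inf' hT x ≤ rankProc x k := le_csSup hbdd hmemT
      obtain ⟨j, hjT, hj⟩ := Finset.exists_mem_eq_inf' hT x
      have : x i < x j := by
        have := hTsub hjT
        simp only [Finset.mem_filter] at this
        exact this.2
      rw [hj, ← h] at hle
      exact absurd hle (not_le.mpr this)
    · rw [← hcN, ← hScard]
      apply Finset.card_le_card
      intro j hj
      simp only [Finset.mem_filter, Finset.mem_univ, true_and]
      calc x i = S.inf' hS x := hxi.symm
        _ ≤ x j := Finset.inf'_le x hj
  · rintro ⟨h1, h2⟩
    have hkc : k - c ≤ N := by omega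
    obtain ⟨T, hTsub, hTcard⟩ := Finset.exists_subset_card_eq hkc
    set S := (Finset.univ.filter fun j : Fin n => x i < x j) ∪ T with hSdef
    have hdisj : Disjoint (Finset.univ.filter fun j : Fin n => x i < x j) T := by
      rw [Finset.disjoint_left]
      intro j hj hjT
      have := hTsub hjT
      simp only [Finset.mem_filter] at this hj
      rw [this.2] at hj
      exact lt_irrefl _ hj.2
    have hScard : S.card = k := by
      rw [hSdef, Finset.card_union_of_disjoint hdisj, hTcard, ← hc]
      omega
    have hS : S.Nonempty := Finset.card_pos.mp (hScard ▸ hk1)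
    have hT : T.Nonempty := Finset.card_pos.mp (by omega : 0 < T.card)
    have hinf : S.inf' hS x = x i := by
      apply le_antisymm
      · obtain ⟨j, hjT⟩ := hT
        have hje : x j = x i := by
          have := hTsub hjT
          simp only [Finset.mem_filter] at this
          exact this.2
        calc S.inf' hS x ≤ x j := Finset.inf'_le x (Finset.mem_union_right _ hjT)
          _ = x i := hje
      · apply Finset.le_inf'
        intro j hj
        rw [hSdef, Finset.mem_union] at hj
        rcases hj with hj | hj
        · simp only [Finset.mem_filter] at hj
          exact le_of_lt hj.2
        · have := hTsub hj
          simp only [Finset.mem_filter] at this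
          exact le_of_eq this.2.symm
    have hmem : x i ∈ R := ⟨S, hScard, hS, hinf.symm⟩
    apply le_antisymm (le_csSup hbdd hmem)
    apply csSup_le ⟨x i, hmem⟩
    rintro r ⟨S', hS'card, hS', rfl⟩
    have : ∃ j ∈ S', ¬ x i < x j := by
      by_contra hcon
      push_neg at hcon
      have hsub : S' ⊆ Finset.univ.filter fun j : Fin n => x i < x j := by
        intro j hj
        simp only [Finset.mem_filter, Finset.mem_univ, true_and]
        exact hcon j hj
      have := Finset.card_le_card hsub
      omega
    obtain ⟨j, hjS, hj⟩ := this
    exact le_trans (Finset.inf'_le x hjS) (not_lt.mp hj)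

/-- For each index i, the weights (1/N(k)) over the ranks k whose value is
attained at i sum to one. -/
theorem sum_inv_N_indicator_eq_one (n : ℕ) (hn : 1 ≤ n) (x : Fin n → ℝ) (i : Fin n) :
    ∑ k ∈ Finset.Icc 1 n,
      (if x i = rankProc x k then
        (1 : ℝ) / ((Finset.univ.filter fun j : Fin n => x j = rankProc x k).card : ℝ)
      else 0) = 1 := by
  set c := (Finset.univ.filter fun j : Fin n => x i < x j).card with hc
  set N := (Finset.univ.filter fun j : Fin n => x j = x i).card with hN
  have hNpos : 0 < N := by
    rw [hN]
    exact Finset.card_pos.mpr ⟨i, by simp⟩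
  have hcNn : c + N ≤ n := by
    have hdisj : Disjoint (Finset.univ.filter fun j : Fin n => x i < x j)
        (Finset.univ.filter fun j : Fin n => x j = x i) := by
      rw [Finset.disjoint_filter]
      intro j _ hj hj'
      rw [hj'] at hj
      exact lt_irrefl _ hj
    calc c + N = ((Finset.univ.filter fun j : Fin n => x i < x j)
          ∪ (Finset.univ.filter fun j : Fin n => x j = x i)).card :=
        (Finset.card_union_of_disjoint hdisj).symm
      _ ≤ (Finset.univ : Finset (Fin n)).card := Finset.card_le_card (Finset.subset_univ _)
      _ = n := by simp
  have key : ∀ k ∈ Finset.Icc 1 n,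
      (if x i = rankProc x k then
        (1 : ℝ) / ((Finset.univ.filter fun j : Fin n => x j = rankProc x k).card : ℝ)
      else 0) = if k ∈ Finset.Icc (c + 1) (c + N) then (1 : ℝ) / N else 0 := by
    intro k hk
    rw [Finset.mem_Icc] at hk
    have hiff := rank_eq_iff x i k hk.1 hk.2
    by_cases h : x i = rankProc x k
    · have hck := hiff.mp h
      rw [if_pos h, if_pos (Finset.mem_Icc.mpr ⟨by omega, by omega⟩)]
      congr 2
      rw [hN]
      congr 1
      ext j
      simp only [Finset.mem_filter, Finset.mem_univ, true_and, ← h]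
    · rw [if_neg h, if_neg]
      rw [Finset.mem_Icc]
      intro hcon
      exact h (hiff.mpr ⟨by omega, by omega⟩)
  rw [Finset.sum_congr rfl key, ← Finset.sum_filter]
  have hfilter : (Finset.Icc 1 n).filter (fun k => k ∈ Finset.Icc (c + 1) (c + N))
      = Finset.Icc (c + 1) (c + N) := by
    ext k
    simp only [Finset.mem_filter, Finset.mem_Icc]
    omega
  rw [hfilter, Finset.sum_const, Nat.card_Icc]
  have : c + N + 1 - (c + 1) = N := by omega
  rw [this, nsmul_eq_mul]
  field_simp
end

section
/- Let n ≥ 1, x : Fin n → ℝ, y : ℝ, and let x' : Fin (n+1) → ℝ be the family obtained by appending y to x. Then for every k with 2 ≤ k ≤ n, one has max(min(rank_{k-1}(x), y), rank_k(x)) = rank_k(x'); that is, (x^{(k-1)} ∧ y) ∨ x^{(k)} equals the k-th largest value among x 1, …, x n, y. -/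
/-!
A `k`-subset of the indices of `Fin.snoc x y` either avoids the new index, and is then a
`k`-subset for `x`, or consists of the new index and a `(k-1)`-subset for `x`, and then its
minimum is `min y (min of x over that subset)`. Conversely both kinds of subsets are available,
so the best `k`-subset for `Fin.snoc x y` is the better of the best of each kind.
-/

lemma finite_setOf_eq_inf' {ι : Type*} [Fintype ι] (x : ι → ℝ) (k : ℕ) :
    {r : ℝ | ∃ S : Finset ι, S.card = k ∧ ∃ hS : S.Nonempty, r = S.inf' hS x}.Finite := by
  refine (Set.finite_range fun S : Finset ι => if h : S.Nonempty then S.inf' h x else 0).subset ?_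
  rintro r ⟨S, -, hS, rfl⟩
  exact ⟨S, dif_pos hS⟩

lemma Fin.exists_map_castSuccEmb_eq_erase_last {n : ℕ} (S : Finset (Fin (n + 1))) :
    ∃ T : Finset (Fin n), T.map Fin.castSuccEmb = S.erase (Fin.last n) := by
  have hsub : S.erase (Fin.last n) ⊆ Finset.univ.map Fin.castSuccEmb := by
    rw [← Fin.Iio_last_eq_map]
    intro i hi
    exact Finset.mem_Iio.mpr (Fin.lt_last_iff_ne_last.mpr (Finset.ne_of_mem_erase hi))
  obtain ⟨T, -, hT⟩ := Finset.subset_map_iff.mp hsub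
  exact ⟨T, hT.symm⟩

section

variable {n k : ℕ} (x : Fin n → ℝ)

lemma le_rankProc {S : Finset (Fin n)} (hS : S.Nonempty) (hcard : S.card = k) :
    S.inf' hS x ≤ rankProc x k :=
  le_csSup (finite_setOf_eq_inf' x k).bddAbove ⟨S, hcard, hS, rfl⟩

lemma exists_inf'_eq_rankProc (hk : 1 ≤ k) (hkn : k ≤ n) :
    ∃ S : Finset (Fin n), ∃ hS : S.Nonempty, S.card = k ∧ S.inf' hS x = rankProc x k := by
  obtain ⟨S, -, hcard⟩ := Finset.exists_subset_card_eq (s := (Finset.univ : Finset (Fin n)))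
    (by simpa using hkn)
  have hS : S.Nonempty := Finset.card_pos.mp (by omega)
  obtain ⟨T, hTcard, hT, hTeq⟩ :=
    Set.Nonempty.csSup_mem (s := {r : ℝ | ∃ S : Finset (Fin n), S.card = k ∧
      ∃ hS : S.Nonempty, r = S.inf' hS x}) ⟨_, S, hcard, hS, rfl⟩ (finite_setOf_eq_inf' x k)
  exact ⟨T, hT, hTcard, hTeq.symm⟩

lemma inf'_map_castSuccEmb_snoc (y : ℝ) {T : Finset (Fin n)} (hT : T.Nonempty) :
    (T.map Fin.castSuccEmb).inf' (hT.map) (Fin.snoc x y) = T.inf' hT x := by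
  rw [Finset.inf'_map]
  exact Finset.inf'_congr _ rfl fun i _ => by simp

lemma inf'_insert_last_map_castSuccEmb_snoc (y : ℝ) {T : Finset (Fin n)} (hT : T.Nonempty) :
    (insert (Fin.last n) (T.map Fin.castSuccEmb)).inf' (Finset.insert_nonempty _ _)
      (Fin.snoc x y) = min y (T.inf' hT x) := by
  rw [Finset.inf'_insert hT.map, inf'_map_castSuccEmb_snoc, Fin.snoc_last]

lemma card_insert_last_map_castSuccEmb (T : Finset (Fin n)) :
    (insert (Fin.last n) (T.map Fin.castSuccEmb)).card = T.card + 1 := by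
  rw [Finset.card_insert_of_notMem, Finset.card_map]
  simp [Fin.castSucc_ne_last]

lemma rankProc_le_rankProc_snoc (y : ℝ) (hk : 1 ≤ k) (hkn : k ≤ n) :
    rankProc x k ≤ rankProc (Fin.snoc x y : Fin (n + 1) → ℝ) k := by
  obtain ⟨T, hT, hcard, hval⟩ := exists_inf'_eq_rankProc x hk hkn
  rw [← hval, ← inf'_map_castSuccEmb_snoc x y hT]
  exact le_rankProc _ _ (by rw [Finset.card_map, hcard])

lemma min_rankProc_le_rankProc_snoc_succ (y : ℝ) (hk : 1 ≤ k) (hkn : k ≤ n) :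
    min (rankProc x k) y ≤ rankProc (Fin.snoc x y : Fin (n + 1) → ℝ) (k + 1) := by
  obtain ⟨T, hT, hcard, hval⟩ := exists_inf'_eq_rankProc x hk hkn
  rw [← hval, min_comm, ← inf'_insert_last_map_castSuccEmb_snoc x y hT]
  exact le_rankProc _ _ (by rw [card_insert_last_map_castSuccEmb, hcard])

lemma rankProc_snoc_succ_le (y : ℝ) (hk : 1 ≤ k) (hkn : k ≤ n) :
    rankProc (Fin.snoc x y : Fin (n + 1) → ℝ) (k + 1)
      ≤ max (min (rankProc x k) y) (rankProc x (k + 1)) := by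
  obtain ⟨S, hS, hcard, hval⟩ := exists_inf'_eq_rankProc (Fin.snoc x y : Fin (n + 1) → ℝ)
    (k := k + 1) (by omega) (by omega)
  obtain ⟨T, hT⟩ := Fin.exists_map_castSuccEmb_eq_erase_last S
  rw [← hval]
  by_cases hlast : Fin.last n ∈ S
  · have hTcard : T.card = k := by
      rw [← Finset.card_map Fin.castSuccEmb, hT, Finset.card_erase_of_mem hlast, hcard]; rfl
    have hTne : T.Nonempty := Finset.card_pos.mp (by omega)
    have hSeq : S = insert (Fin.last n) (T.map Fin.castSuccEmb) := by
      rw [hT, Finset.insert_erase hlast]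
    subst hSeq
    rw [inf'_insert_last_map_castSuccEmb_snoc x y hTne, min_comm]
    exact le_max_of_le_left (min_le_min_right y (le_rankProc x hTne hTcard))
  · rw [Finset.erase_eq_of_notMem hlast] at hT
    subst hT
    have hTne : T.Nonempty := Finset.map_nonempty.mp hS
    rw [inf'_map_castSuccEmb_snoc x y hTne]
    exact le_max_of_le_right (le_rankProc x hTne (by rwa [Finset.card_map] at hcard))

end

theorem rank_snoc_general (n : ℕ) (x : Fin n → ℝ) (y : ℝ) (k : ℕ)
    (hk : 2 ≤ k) (hkn : k ≤ n) :
    max (min (rankProc x (k - 1)) y) (rankProc x k)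
      = rankProc (Fin.snoc x y : Fin (n + 1) → ℝ) k := by
  obtain ⟨j, rfl⟩ : ∃ j, k = j + 1 := ⟨k - 1, by omega⟩
  rw [Nat.add_sub_cancel]
  refine le_antisymm (max_le ?_ ?_) (rankProc_snoc_succ_le x y (by omega) (by omega))
  · exact min_rankProc_le_rankProc_snoc_succ x y (by omega) (by omega)
  · exact rankProc_le_rankProc_snoc x y (by omega) hkn

/-- (x^{(k-1)} ∧ y) ∨ x^{(k)} is the k-th rank of the family extended by y. -/
theorem rank_snoc (n : ℕ) (hn : 1 ≤ n) (x : Fin n → ℝ) (y : ℝ) (k : ℕ)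
    (hk : 2 ≤ k) (hkn : k ≤ n) :
    max (min (rankProc x (k - 1)) y) (rankProc x k)
      = rankProc (Fin.snoc x y : Fin (n + 1) → ℝ) k :=
  rank_snoc_general n x y k hk hkn
end
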